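/- arXiv:2302.10156 — 6 statements merged into one kernel-verified Lean document; each statement's English description precedes it below -/
import Mathlib

section
/- For every ρ ∈ [0,1], the product binomial measure ν_ρ(η) := ∏_{z∈V} C(α_z, η(z)) ρ^{η(z)} (1−ρ)^{α_z − η(z)} is reversible for the partial exclusion generator L; that is, for all functions φ, ψ : Ξ → ℝ, Σ_{η∈Ξ} ν_ρ(η) φ(η) (Lψ)(η) = Σ_{η∈Ξ} ν_ρ(η) (Lφ)(η) ψ(η). -/
open scoped BigOperators

/-- Configuration space: at most `α x` particles at each site `x`. -/
abbrev Conf {V : Type*} (α : V → ℕ) : Type _ := ∀ x : V, Fin (α x + 1)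

/-- The configuration `η` with one particle moved from `x` to `y`. -/
def move {V : Type*} [DecidableEq V] (α : V → ℕ) (η : Conf α) (x y : V) : Conf α :=
  Function.update
    (Function.update η x ⟨(η x : ℕ) - 1, by have := (η x).isLt; omega⟩)
    y ⟨min ((η y : ℕ) + 1) (α y), by
      have := Nat.min_le_right ((η y : ℕ) + 1) (α y); omega⟩

/-- Jump rate of the partial exclusion process of interacting BTM(a):
rate for moving a particle from `x` to `y`.  It vanishes if `η x = 0` or
`η y = α y`, so `move` is only effectively used where it is well defined. -/
noncomputable def jumpRate {V : Type*} (α : V → ℕ) (a : ℝ) (η : Conf α) (x y : V) : ℝ :=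
  ((η x : ℕ) : ℝ) * (α x : ℝ) ^ (a - 1) * (α y : ℝ) ^ a *
    (1 - ((η y : ℕ) : ℝ) / (α y : ℝ))

/-- The partial exclusion generator `L` in environment `α`. -/
noncomputable def gen {V : Type*} [Fintype V] [DecidableEq V] (α : V → ℕ) (a : ℝ)
    (adj : V → V → Prop) [DecidableRel adj] (φ : Conf α → ℝ) (η : Conf α) : ℝ :=
  ∑ x : V, ∑ y : V,
    if adj x y then jumpRate α a η x y * (φ (move α η x y) - φ η) else 0

/-- The single-particle (Bouchaud trap model) generator `A`. -/
noncomputable def sgen {V : Type*} [Fintype V] (α : V → ℕ) (a : ℝ)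
    (adj : V → V → Prop) [DecidableRel adj] (g : V → ℝ) (x : V) : ℝ :=
  (α x : ℝ) ^ (a - 1) * ∑ y : V, if adj x y then (α y : ℝ) ^ a * (g y - g x) else 0

/-- The product binomial measure `ν_ρ`. -/
noncomputable def binProd {V : Type*} [Fintype V] (α : V → ℕ) (ρ : ℝ) (η : Conf α) : ℝ :=
  ∏ z : V, (((α z).choose (η z : ℕ) : ℝ) * ρ ^ ((η z : ℕ)) * (1 - ρ) ^ (α z - (η z : ℕ)))

section aux
variable {V : Type*} [DecidableEq V] (α : V → ℕ)

lemma move_x (η : Conf α) {x y : V} (hxy : x ≠ y) :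
    ((move α η x y) x : ℕ) = (η x : ℕ) - 1 := by
  simp [move, Function.update_of_ne hxy, Function.update_self]

lemma move_y (η : Conf α) (x y : V) :
    ((move α η x y) y : ℕ) = min ((η y : ℕ) + 1) (α y) := by
  simp [move]

lemma move_other (η : Conf α) {x y z : V} (hx : z ≠ x) (hy : z ≠ y) :
    ((move α η x y) z : ℕ) = (η z : ℕ) := by
  simp [move, Function.update_of_ne hy, Function.update_of_ne hx]

lemma move_move (η : Conf α) {x y : V} (hxy : x ≠ y)
    (h1 : 1 ≤ (η x : ℕ)) (h2 : (η y : ℕ) < α y) :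
    move α (move α η x y) y x = η := by
  funext z
  apply Fin.ext
  by_cases hzx : z = x
  · subst hzx
    rw [move_y, move_x α η hxy]
    have := (η z).isLt
    omega
  · by_cases hzy : z = y
    · subst hzy
      rw [move_x α _ (Ne.symm hxy), move_y]
      omega
    · rw [move_other α _ hzy hzx, move_other α η hzx hzy]

end aux

lemma rate_zero {V : Type*} (α : V → ℕ) (hα : ∀ x, 1 ≤ α x) (a : ℝ) (η : Conf α)
    (x y : V) (h : ¬ (1 ≤ (η x : ℕ) ∧ (η y : ℕ) < α y)) :
    jumpRate α a η x y = 0 := by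
  push_neg at h
  by_cases hx : 1 ≤ (η x : ℕ)
  · have hy : (η y : ℕ) = α y := by
      have := (η y).isLt
      have := h hx
      omega
    have hy0 : (α y : ℝ) ≠ 0 := by
      have : (0:ℕ) < α y := hα y
      positivity
    rw [jumpRate, hy, div_self hy0]
    ring
  · have : (η x : ℕ) = 0 := by omega
    rw [jumpRate, this]
    norm_num

lemma scalar_db (m n k l : ℕ) (hk : 1 ≤ k) (hkm : k ≤ m) (hln : l < n) (ρ : ℝ) :
    ((m.choose k : ℝ) * ρ ^ k * (1 - ρ) ^ (m - k)) *
      ((n.choose l : ℝ) * ρ ^ l * (1 - ρ) ^ (n - l)) * ((k : ℝ) * ((n : ℝ) - (l : ℝ)))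
    = ((m.choose (k - 1) : ℝ) * ρ ^ (k - 1) * (1 - ρ) ^ (m - (k - 1))) *
      ((n.choose (l + 1) : ℝ) * ρ ^ (l + 1) * (1 - ρ) ^ (n - (l + 1))) *
      (((l : ℝ) + 1) * ((m : ℝ) - ((k : ℝ) - 1))) := by
  have h1 : m.choose k * k = m.choose (k - 1) * (m - (k - 1)) := by
    have := Nat.choose_succ_right_eq m (k - 1)
    rwa [Nat.sub_add_cancel hk] at this
  have h2 : n.choose (l + 1) * (l + 1) = n.choose l * (n - l) := Nat.choose_succ_right_eq n l
  have h1' : (m.choose k : ℝ) * k = (m.choose (k - 1) : ℝ) * ((m : ℝ) - ((k : ℝ) - 1)) := by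
    have := congrArg (Nat.cast : ℕ → ℝ) h1
    push_cast [Nat.cast_sub (by omega : k - 1 ≤ m), Nat.cast_sub hk] at this
    linarith [this]
  have h2' : (n.choose (l + 1) : ℝ) * ((l : ℝ) + 1) = (n.choose l : ℝ) * ((n : ℝ) - l) := by
    have := congrArg (Nat.cast : ℕ → ℝ) h2
    push_cast [Nat.cast_sub hln.le] at this
    linarith [this]
  have pk : ρ ^ k = ρ ^ (k - 1) * ρ := by
    rw [← pow_succ]; congr 1; omega
  have pl : ρ ^ (l + 1) = ρ ^ l * ρ := pow_succ ρ l
  have qk : (1 - ρ) ^ (m - (k - 1)) = (1 - ρ) ^ (m - k) * (1 - ρ) := by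
    rw [← pow_succ]; congr 1; omega
  have ql : (1 - ρ) ^ (n - l) = (1 - ρ) ^ (n - (l + 1)) * (1 - ρ) := by
    rw [← pow_succ]; congr 1; omega
  rw [pk, pl, qk, ql]
  linear_combination (ρ ^ (k - 1) * ρ * (1 - ρ) ^ (m - k) * ρ ^ l * (1 - ρ) ^ (n - (l + 1)) *
      (1 - ρ) * ((n.choose l : ℝ) * ((n : ℝ) - l))) * h1'
    + (ρ ^ (k - 1) * ρ * (1 - ρ) ^ (m - k) * ρ ^ l * (1 - ρ) ^ (n - (l + 1)) * (1 - ρ) *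
      ((m.choose (k - 1) : ℝ) * ((m : ℝ) - ((k : ℝ) - 1)))) * h2'.symm

lemma detailed_balance {V : Type*} [Fintype V] [DecidableEq V] (α : V → ℕ)
    (hα : ∀ x, 1 ≤ α x) (a ρ : ℝ) (η : Conf α) {x y : V} (hxy : x ≠ y)
    (h1 : 1 ≤ (η x : ℕ)) (h2 : (η y : ℕ) < α y) :
    binProd α ρ η * jumpRate α a η x y
      = binProd α ρ (move α η x y) * jumpRate α a (move α η x y) y x := by
  set w : V → ℕ → ℝ := fun z n =>
    ((α z).choose n : ℝ) * ρ ^ n * (1 - ρ) ^ (α z - n) with hw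
  have hyX : y ∈ Finset.univ.erase x := Finset.mem_erase.mpr ⟨Ne.symm hxy, Finset.mem_univ y⟩
  have split : ∀ ξ : Conf α, binProd α ρ ξ =
      w x (ξ x : ℕ) * (w y (ξ y : ℕ) *
        ∏ z ∈ (Finset.univ.erase x).erase y, w z (ξ z : ℕ)) := by
    intro ξ
    rw [binProd, ← Finset.mul_prod_erase Finset.univ _ (Finset.mem_univ x),
      ← Finset.mul_prod_erase _ _ hyX]
  have mx : ((move α η x y) x : ℕ) = (η x : ℕ) - 1 := move_x α η hxy
  have my : ((move α η x y) y : ℕ) = (η y : ℕ) + 1 := by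
    rw [move_y]; omega
  have rest : (∏ z ∈ (Finset.univ.erase x).erase y, w z ((move α η x y) z : ℕ))
      = ∏ z ∈ (Finset.univ.erase x).erase y, w z ((η z : ℕ)) := by
    apply Finset.prod_congr rfl
    intro z hz
    have hz' := Finset.mem_erase.mp hz
    have hz'' := Finset.mem_erase.mp hz'.2
    rw [move_other α η hz''.1 hz'.1]
  have hxpos : (0 : ℝ) < (α x : ℝ) := by exact_mod_cast hα x
  have hypos : (0 : ℝ) < (α y : ℝ) := by exact_mod_cast hα y
  have rpx : (α x : ℝ) ^ a = (α x : ℝ) ^ (a - 1) * (α x : ℝ) := by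
    rw [← Real.rpow_add_one hxpos.ne']
    norm_num
  have rpy : (α y : ℝ) ^ a = (α y : ℝ) ^ (a - 1) * (α y : ℝ) := by
    rw [← Real.rpow_add_one hypos.ne']
    norm_num
  have rate1 : jumpRate α a η x y
      = (α x : ℝ) ^ (a - 1) * (α y : ℝ) ^ (a - 1) *
        (((η x : ℕ) : ℝ) * ((α y : ℝ) - ((η y : ℕ) : ℝ))) := by
    rw [jumpRate, rpy]
    field_simp
  have rate2 : jumpRate α a (move α η x y) y x
      = (α x : ℝ) ^ (a - 1) * (α y : ℝ) ^ (a - 1) *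
        ((((η y : ℕ) : ℝ) + 1) * ((α x : ℝ) - (((η x : ℕ) : ℝ) - 1))) := by
    rw [jumpRate, rpx, mx, my]
    rw [Nat.cast_sub h1]
    push_cast
    field_simp
  rw [split η, split (move α η x y), rest, mx, my, rate1, rate2]
  have key := scalar_db (α x) (α y) ((η x : ℕ)) ((η y : ℕ)) h1
    (by have := (η x).isLt; omega) h2 ρ
  simp only [hw]
  linear_combination ((α x : ℝ) ^ (a - 1) * (α y : ℝ) ^ (a - 1) *
    ∏ z ∈ (Finset.univ.erase x).erase y, w z ((η z : ℕ))) * key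

lemma pair_swap {V : Type*} [Fintype V] [DecidableEq V] (α : V → ℕ)
    (hα : ∀ x, 1 ≤ α x) (a ρ : ℝ) {x y : V} (hxy : x ≠ y) (f g : Conf α → ℝ) :
    ∑ η : Conf α, binProd α ρ η * jumpRate α a η x y * f η * g (move α η x y)
      = ∑ η : Conf α, binProd α ρ η * jumpRate α a η y x * f (move α η y x) * g η := by
  have hL : ∀ η ∈ (Finset.univ : Finset (Conf α)),
      η ∉ Finset.univ.filter (fun η : Conf α => 1 ≤ (η x : ℕ) ∧ (η y : ℕ) < α y) →
      binProd α ρ η * jumpRate α a η x y * f η * g (move α η x y) = 0 := by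
    intro η _ hη
    simp only [Finset.mem_filter, Finset.mem_univ, true_and] at hη
    rw [rate_zero α hα a η x y hη]
    ring
  have hR : ∀ η ∈ (Finset.univ : Finset (Conf α)),
      η ∉ Finset.univ.filter (fun η : Conf α => 1 ≤ (η y : ℕ) ∧ (η x : ℕ) < α x) →
      binProd α ρ η * jumpRate α a η y x * f (move α η y x) * g η = 0 := by
    intro η _ hη
    simp only [Finset.mem_filter, Finset.mem_univ, true_and] at hη
    rw [rate_zero α hα a η y x hη]
    ring
  rw [← Finset.sum_subset (Finset.filter_subset _ _) hL,
    ← Finset.sum_subset (Finset.filter_subset _ _) hR]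
  refine Finset.sum_nbij' (fun η => move α η x y) (fun ξ => move α ξ y x) ?_ ?_ ?_ ?_ ?_
  · intro η hη
    simp only [Finset.mem_filter, Finset.mem_univ, true_and] at hη ⊢
    have hx' := (η x).isLt
    rw [move_y, move_x α η hxy]
    constructor
    · omega
    · have := hα x
      omega
  · intro ξ hξ
    simp only [Finset.mem_filter, Finset.mem_univ, true_and] at hξ ⊢
    have hy' := (ξ y).isLt
    rw [move_y, move_x α ξ (Ne.symm hxy)]
    constructor
    · omega
    · have := hα y
      omega
  · intro η hη
    simp only [Finset.mem_filter, Finset.mem_univ, true_and] at hη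
    exact move_move α η hxy hη.1 hη.2
  · intro ξ hξ
    simp only [Finset.mem_filter, Finset.mem_univ, true_and] at hξ
    exact move_move α ξ (Ne.symm hxy) hξ.1 hξ.2
  · intro η hη
    simp only [Finset.mem_filter, Finset.mem_univ, true_and] at hη
    rw [move_move α η hxy hη.1 hη.2]
    have db := detailed_balance α hα a ρ η hxy hη.1 hη.2
    linear_combination (f η * g (move α η x y)) * db

/-- the product binomial measure `ν_ρ` is reversible for the
partial exclusion generator `L`. -/
theorem binomial_reversible {V : Type*} [Fintype V] [DecidableEq V]
    (adj : V → V → Prop) [DecidableRel adj]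
    (hsym : ∀ x y, adj x y → adj y x) (hirr : ∀ x, ¬ adj x x)
    (a : ℝ) (ha0 : 0 ≤ a) (ha1 : a ≤ 1)
    (α : V → ℕ) (hα : ∀ x, 1 ≤ α x)
    (ρ : ℝ) (hρ0 : 0 ≤ ρ) (hρ1 : ρ ≤ 1)
    (φ ψ : Conf α → ℝ) :
    ∑ η : Conf α, binProd α ρ η * φ η * gen α a adj ψ η
      = ∑ η : Conf α, binProd α ρ η * gen α a adj φ η * ψ η := by
  have expand : ∀ F G : Conf α → ℝ,
      ∑ η : Conf α, binProd α ρ η * F η * gen α a adj G η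
      = (∑ x : V, ∑ y : V, if adj x y then
            ∑ η : Conf α, binProd α ρ η * jumpRate α a η x y * F η * G (move α η x y) else 0)
        - (∑ x : V, ∑ y : V, if adj x y then
            ∑ η : Conf α, binProd α ρ η * jumpRate α a η x y * F η * G η else 0) := by
    intro F G
    simp only [gen, Finset.mul_sum, mul_ite, mul_zero]
    rw [Finset.sum_comm, ← Finset.sum_sub_distrib]
    refine Finset.sum_congr rfl fun x _ => ?_
    rw [Finset.sum_comm, ← Finset.sum_sub_distrib]
    refine Finset.sum_congr rfl fun y _ => ?_
    by_cases h : adj x y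
    · simp only [if_pos h, ← Finset.sum_sub_distrib]
      exact Finset.sum_congr rfl fun η _ => by ring
    · simp [if_neg h]
  have hRHS : ∑ η : Conf α, binProd α ρ η * gen α a adj φ η * ψ η
      = ∑ η : Conf α, binProd α ρ η * ψ η * gen α a adj φ η :=
    Finset.sum_congr rfl fun η _ => by ring
  rw [hRHS, expand φ ψ, expand ψ φ]
  have hD : (∑ x : V, ∑ y : V, if adj x y then
        ∑ η : Conf α, binProd α ρ η * jumpRate α a η x y * φ η * ψ η else 0)
      = ∑ x : V, ∑ y : V, if adj x y then
        ∑ η : Conf α, binProd α ρ η * jumpRate α a η x y * ψ η * φ η else 0 := by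
    refine Finset.sum_congr rfl fun x _ => Finset.sum_congr rfl fun y _ => ?_
    by_cases h : adj x y
    · rw [if_pos h, if_pos h]
      exact Finset.sum_congr rfl fun η _ => by ring
    · rw [if_neg h, if_neg h]
  have step1 : (∑ x : V, ∑ y : V, if adj x y then
        ∑ η : Conf α, binProd α ρ η * jumpRate α a η x y * φ η * ψ (move α η x y) else 0)
      = ∑ x : V, ∑ y : V, if adj x y then
        ∑ η : Conf α, binProd α ρ η * jumpRate α a η y x * φ (move α η y x) * ψ η else 0 := by
    refine Finset.sum_congr rfl fun x _ => Finset.sum_congr rfl fun y _ => ?_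
    by_cases h : adj x y
    · rw [if_pos h, if_pos h]
      have hxy : x ≠ y := fun e => hirr x (by rw [e] at h ⊢; exact h)
      exact pair_swap α hα a ρ hxy φ ψ
    · rw [if_neg h, if_neg h]
  have step2 : (∑ x : V, ∑ y : V, if adj x y then
        ∑ η : Conf α, binProd α ρ η * jumpRate α a η y x * φ (move α η y x) * ψ η else 0)
      = ∑ x : V, ∑ y : V, if adj x y then
        ∑ η : Conf α, binProd α ρ η * jumpRate α a η x y * ψ η * φ (move α η x y) else 0 := by
    rw [Finset.sum_comm]
    refine Finset.sum_congr rfl fun x _ => Finset.sum_congr rfl fun y _ => ?_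
    by_cases h : adj x y
    · rw [if_pos (hsym x y h), if_pos h]
      exact Finset.sum_congr rfl fun η _ => by ring
    · rw [if_neg (fun h' => h (hsym y x h')), if_neg h]
  rw [step1, step2, hD]
end

section
/- One-particle self-duality at the level of generators: for every η ∈ Ξ and every x ∈ V, applying the partial exclusion generator L to the function η ↦ η(x)/α_x and evaluating at η yields the same value as applying the single-particle generator A to the function y ↦ η(y)/α_y and evaluating at x; that is, L(D(x,·))(η) = A(D(·,η))(x), where D(x,η) := η(x)/α_x. -/
open scoped BigOperators

/-- one-particle self-duality at the level of generators,
with duality function `D(x, η) = η(x)/α_x`. -/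
theorem one_particle_duality {V : Type*} [Fintype V] [DecidableEq V]
    (adj : V → V → Prop) [DecidableRel adj]
    (hsym : ∀ x y, adj x y → adj y x) (hirr : ∀ x, ¬ adj x x)
    (a : ℝ) (ha0 : 0 ≤ a) (ha1 : a ≤ 1)
    (α : V → ℕ) (hα : ∀ x, 1 ≤ α x)
    (η : Conf α) (x : V) :
    gen α a adj (fun ξ => ((ξ x : ℕ) : ℝ) / (α x : ℝ)) η
      = sgen α a adj (fun y => ((η y : ℕ) : ℝ) / (α y : ℝ)) x := by
  classical
  set f : V → V → ℝ := fun z w =>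
    if adj z w then jumpRate α a η z w *
      (((move α η z w x : ℕ) : ℝ) / (α x : ℝ) - ((η x : ℕ) : ℝ) / (α x : ℝ)) else 0 with hf
  have hAx : ((α x : ℕ) : ℝ) ≠ 0 := Nat.cast_ne_zero.mpr (by have := hα x; omega)
  have hgen : gen α a adj (fun ξ => ((ξ x : ℕ) : ℝ) / (α x : ℝ)) η = ∑ z, ∑ w, f z w := rfl
  have hvanish : ∀ z w : V, z ≠ x → w ≠ x → f z w = 0 := by
    intro z w hz hw
    have hmv : ((move α η z w x : ℕ) : ℝ) = ((η x : ℕ) : ℝ) := by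
      rw [move, Function.update_of_ne (fun h => hw h.symm),
        Function.update_of_ne (fun h => hz h.symm)]
    simp [hf, hmv]
  have hfxx : f x x = 0 := by simp [hf, hirr x]
  have hsplit : (∑ z, ∑ w, f z w) = (∑ w, f x w) + ∑ z, f z x := by
    rw [← Finset.add_sum_erase Finset.univ (fun z => ∑ w, f z w) (Finset.mem_univ x)]
    congr 1
    have h1 : ∀ z ∈ Finset.univ.erase x, (∑ w, f z w) = f z x := by
      intro z hz
      apply Finset.sum_eq_single_of_mem x (Finset.mem_univ x)
      intro w _ hww; exact hvanish z w (Finset.ne_of_mem_erase hz) hww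
    rw [Finset.sum_congr rfl h1]; exact Finset.sum_erase _ hfxx
  rw [hgen, hsplit, sgen, Finset.mul_sum, ← Finset.sum_add_distrib]
  apply Finset.sum_congr rfl
  intro w _
  by_cases hw : w = x
  · subst hw; simp [hfxx, hirr w]
  by_cases hadj : adj x w
  · have hadj' : adj w x := hsym x w hadj
    have hm1 : ((move α η x w x : ℕ)) = (η x : ℕ) - 1 := by
      rw [move, Function.update_of_ne (fun h => hw h.symm), Function.update_self]
    have hm2 : ((move α η w x x : ℕ)) = min ((η x : ℕ) + 1) (α x) := by
      rw [move, Function.update_self]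
    have hAw : ((α w : ℕ) : ℝ) ≠ 0 := Nat.cast_ne_zero.mpr (by have := hα w; omega)
    simp only [hf, if_pos hadj, if_pos hadj', mul_ite, mul_zero, hm1, hm2, jumpRate]
    rw [Real.rpow_sub_one hAx a, Real.rpow_sub_one hAw a]
    have hlt : (η x : ℕ) ≤ α x := by have := (η x).isLt; omega
    rcases Nat.eq_zero_or_pos (η x : ℕ) with h0 | h1
    · have hmin : min ((η x : ℕ) + 1) (α x) = 1 := by
        have := hα x; omega
      rw [hmin, h0]
      norm_num
      field_simp
    · rcases eq_or_lt_of_le hlt with htop | hmid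
      · have hmin : min ((η x : ℕ) + 1) (α x) = α x := by omega
        rw [hmin, Nat.cast_sub h1, htop]
        push_cast
        field_simp
        ring
      · have hmin : min ((η x : ℕ) + 1) (α x) = (η x : ℕ) + 1 := by omega
        rw [hmin, Nat.cast_sub h1]
        push_cast
        field_simp
        ring
  · have hadj' : ¬ adj w x := fun h => hadj (hsym w x h)
    simp [hf, hadj, hadj']
end

section
/- One-particle self-duality at the level of semigroups: for every t ≥ 0, every η ∈ Ξ, and every x ∈ V, Σ_{ξ∈Ξ} (exp(tL))(η,ξ) · ξ(x) = α_x · Σ_{y∈V} (exp(tA))(x,y) · η(y)/α_y, where exp(tL) and exp(tA) denote the matrix exponentials of L (viewed as a matrix indexed by Ξ, with (Lφ)(η) = Σ_ξ L(η,ξ) φ(ξ)) and of A (viewed as a matrix indexed by V, with (Ag)(x) = Σ_y A(x,y) g(y)), respectively. -/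
open scoped BigOperators

/-!
The normalized occupation `D(ξ, y) = ξ(y) / α_y` is a duality function between `L` and `A`:
`L D(·, x)` at `η` is the net rate of particles jumping into `x`, divided by `α_x`, and once the
rates are written out the exclusion terms `η(x) η(y)` of the two directions cancel, leaving
`A D(η, ·)` at `x`. As a matrix identity this reads `L D = D Aᵀ`, which passes to all powers and
hence to the exponential series: `exp(tL) D = D exp(tA)ᵀ`, whose `(η, x)` entry is the claim.
-/

open scoped Matrix

theorem Matrix.pow_mul_eq_mul_pow_of_mul_eq {m n R : Type*} [Fintype m] [DecidableEq m]
    [Fintype n] [DecidableEq n] [Semiring R] {M : Matrix m m R} {N : Matrix n n R}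
    {D : Matrix m n R} (h : M * D = D * N) (k : ℕ) : M ^ k * D = D * N ^ k := by
  induction k with
  | zero => simp
  | succ k ih =>
    rw [pow_succ, pow_succ, Matrix.mul_assoc, h, ← Matrix.mul_assoc, ih, Matrix.mul_assoc]

open NormedSpace in
theorem Matrix.exp_mul_eq_mul_exp_of_mul_eq {m n 𝕂 : Type*} [Fintype m] [DecidableEq m]
    [Fintype n] [DecidableEq n] [RCLike 𝕂]
    {M : Matrix m m 𝕂} {N : Matrix n n 𝕂} {D : Matrix m n 𝕂} (h : M * D = D * N) :
    exp M * D = D * exp N := by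
  open scoped Norms.Operator in
  refine ((exp_series_hasSum_exp' (𝕂 := 𝕂) M).map (Matrix.addMonoidHomMulRight D)
    (continuous_id.matrix_mul continuous_const)).unique ?_
  open scoped Norms.Operator in
  convert (exp_series_hasSum_exp' (𝕂 := 𝕂) N).map (Matrix.addMonoidHomMulLeft D)
    (continuous_const.matrix_mul continuous_id) using 1
  · funext k
    simp [Matrix.addMonoidHomMulRight, Matrix.addMonoidHomMulLeft, Matrix.smul_mul,
      Matrix.mul_smul, Matrix.pow_mul_eq_mul_pow_of_mul_eq h]
  · rfl

theorem sum_sum_mul_ite_sub_ite {V R : Type*} [Fintype V] [DecidableEq V] [Ring R]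
    (r : V → V → R) (x : V) :
    ∑ u, ∑ v, r u v * ((if x = v then 1 else 0) - (if x = u then 1 else 0))
      = ∑ y, (r y x - r x y) := by
  simp [mul_sub, Finset.sum_sub_distrib]

theorem coe_move_apply {V : Type*} [DecidableEq V] (α : V → ℕ) (η : Conf α) {u v : V}
    (huv : u ≠ v) (z : V) :
    ((move α η u v z : ℕ)) = if z = v then min ((η v : ℕ) + 1) (α v)
      else if z = u then (η u : ℕ) - 1 else (η z : ℕ) := by
  unfold move
  rcases eq_or_ne z v with rfl | hv
  · simp
  · rw [Function.update_of_ne hv]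
    rcases eq_or_ne z u with rfl | hu
    · simp [hv]
    · simp [hv, hu]

theorem jumpRate_mul_move_sub {V : Type*} [DecidableEq V] (α : V → ℕ) (a : ℝ) (η : Conf α)
    {u v : V} (huv : u ≠ v) (hv : α v ≠ 0) (x : V) :
    jumpRate α a η u v * (((move α η u v x : ℕ) : ℝ) - ((η x : ℕ) : ℝ))
      = jumpRate α a η u v * ((if x = v then 1 else 0) - (if x = u then 1 else 0)) := by
  rw [coe_move_apply α η huv]
  rcases eq_or_ne x v with rfl | hxv
  · simp only [if_neg (Ne.symm huv)]
    rcases eq_or_ne (η x : ℕ) (α x) with h | h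
    · have : jumpRate α a η u x = 0 := by
        simp [jumpRate, h, div_self (Nat.cast_ne_zero.mpr hv : (α x : ℝ) ≠ 0)]
      simp [this]
    · rw [min_eq_left (by omega)]
      push_cast
      ring
  rcases eq_or_ne x u with rfl | hxu
  · rcases Nat.eq_zero_or_pos (η x : ℕ) with h | h
    · have : jumpRate α a η x v = 0 := by simp [jumpRate, h]
      simp [this]
    · simp [hxv, Nat.cast_sub h]
  · simp [hxv, hxu]

-- Both rates carry the exclusion factor; the terms `η x * η y` they produce cancel.
theorem jumpRate_sub_jumpRate_div {V : Type*} (α : V → ℕ) (a : ℝ) (η : Conf α) {x y : V}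
    (hx : α x ≠ 0) (hy : α y ≠ 0) :
    (jumpRate α a η y x - jumpRate α a η x y) / α x
      = (α x : ℝ) ^ (a - 1) *
          ((α y : ℝ) ^ a * ((η y : ℕ) / (α y : ℝ) - (η x : ℕ) / (α x : ℝ))) := by
  have hx' : (α x : ℝ) ≠ 0 := Nat.cast_ne_zero.mpr hx
  have hy' : (α y : ℝ) ≠ 0 := Nat.cast_ne_zero.mpr hy
  simp only [jumpRate, Real.rpow_sub_one hx', Real.rpow_sub_one hy']
  field_simp
  ring

theorem gen_div_const {V : Type*} [Fintype V] [DecidableEq V] (α : V → ℕ) (a : ℝ)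
    (adj : V → V → Prop) [DecidableRel adj] (φ : Conf α → ℝ) (c : ℝ) (η : Conf α) :
    gen α a adj (fun ξ => φ ξ / c) η = gen α a adj φ η / c := by
  simp only [gen, Finset.sum_div, ite_div, zero_div, ← sub_div, mul_div_assoc]

theorem gen_occupation {V : Type*} [Fintype V] [DecidableEq V] (α : V → ℕ) (hα : ∀ x, α x ≠ 0)
    (a : ℝ) (adj : V → V → Prop) [DecidableRel adj] (hsym : ∀ x y, adj x y → adj y x)
    (hirr : ∀ x, ¬ adj x x) (η : Conf α) (x : V) :
    gen α a adj (fun ξ => ((ξ x : ℕ) : ℝ)) η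
      = ∑ y, if adj x y then jumpRate α a η y x - jumpRate α a η x y else 0 := by
  have hterm (u v : V) :
      (if adj u v then jumpRate α a η u v * (((move α η u v x : ℕ) : ℝ) - (η x : ℕ)) else 0)
        = (if adj u v then jumpRate α a η u v else 0)
          * ((if x = v then 1 else 0) - (if x = u then 1 else 0)) := by
    by_cases h : adj u v
    · have huv : u ≠ v := fun he => hirr v (he ▸ h)
      simp only [if_pos h, jumpRate_mul_move_sub α a η huv (hα v)]
    · simp [h]
  simp only [gen, hterm, sum_sum_mul_ite_sub_ite]
  refine Finset.sum_congr rfl fun y _ => ?_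
  by_cases h : adj x y
  · simp [h, hsym x y h]
  · have h' : ¬ adj y x := fun h' => h (hsym y x h')
    simp [h, h']

theorem gen_normalizedOccupation {V : Type*} [Fintype V] [DecidableEq V] (α : V → ℕ)
    (hα : ∀ x, α x ≠ 0) (a : ℝ) (adj : V → V → Prop) [DecidableRel adj]
    (hsym : ∀ x y, adj x y → adj y x) (hirr : ∀ x, ¬ adj x x) (η : Conf α) (x : V) :
    gen α a adj (fun ξ => ((ξ x : ℕ) : ℝ) / α x) η
      = sgen α a adj (fun y => ((η y : ℕ) : ℝ) / α y) x := by
  rw [gen_div_const, gen_occupation α hα a adj hsym hirr, sgen, Finset.mul_sum, Finset.sum_div]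
  refine Finset.sum_congr rfl fun y _ => ?_
  by_cases h : adj x y
  · simp only [if_pos h, jumpRate_sub_jumpRate_div α a η (hα x) (hα y)]
  · simp [h]

noncomputable def dualityMatrix {V : Type*} (α : V → ℕ) : Matrix (Conf α) V ℝ :=
  Matrix.of fun ξ y => ((ξ y : ℕ) : ℝ) / α y

theorem mul_dualityMatrix {V : Type*} [Fintype V] [DecidableEq V] (α : V → ℕ)
    (hα : ∀ x, α x ≠ 0) (a : ℝ) (adj : V → V → Prop) [DecidableRel adj]
    (hsym : ∀ x y, adj x y → adj y x) (hirr : ∀ x, ¬ adj x x)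
    {ML : Matrix (Conf α) (Conf α) ℝ}
    (hML : ∀ (φ : Conf α → ℝ) (η : Conf α), ∑ ξ : Conf α, ML η ξ * φ ξ = gen α a adj φ η)
    {MA : Matrix V V ℝ} (hMA : ∀ (g : V → ℝ) (x : V), ∑ y : V, MA x y * g y = sgen α a adj g x) :
    ML * dualityMatrix α = dualityMatrix α * MAᵀ := by
  ext η x
  calc (ML * dualityMatrix α) η x
      = gen α a adj (fun ξ => ((ξ x : ℕ) : ℝ) / α x) η := hML _ η
    _ = sgen α a adj (fun y => ((η y : ℕ) : ℝ) / α y) x :=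
        gen_normalizedOccupation α hα a adj hsym hirr η x
    _ = (dualityMatrix α * MAᵀ) η x := by
        rw [← hMA, Matrix.mul_apply]
        exact Finset.sum_congr rfl fun y _ => mul_comm _ _

theorem one_particle_duality_semigroup_general {V : Type*} [Fintype V] [DecidableEq V]
    (adj : V → V → Prop) [DecidableRel adj]
    (hsym : ∀ x y, adj x y → adj y x) (hirr : ∀ x, ¬ adj x x)
    (a : ℝ)
    (α : V → ℕ) (hα : ∀ x, 1 ≤ α x)
    (ML : Matrix (Conf α) (Conf α) ℝ)
    (hML : ∀ (φ : Conf α → ℝ) (η : Conf α), ∑ ξ : Conf α, ML η ξ * φ ξ = gen α a adj φ η)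
    (MA : Matrix V V ℝ)
    (hMA : ∀ (g : V → ℝ) (x : V), ∑ y : V, MA x y * g y = sgen α a adj g x)
    (t : ℝ) (η : Conf α) (x : V) :
    ∑ ξ : Conf α, NormedSpace.exp (t • ML) η ξ * ((ξ x : ℕ) : ℝ)
      = (α x : ℝ) *
        ∑ y : V, NormedSpace.exp (t • MA) x y * (((η y : ℕ) : ℝ) / (α y : ℝ)) := by
  have hα' (y : V) : α y ≠ 0 := Nat.one_le_iff_ne_zero.mp (hα y)
  have hgen := mul_dualityMatrix α hα' a adj hsym hirr hML hMA
  have hexp := Matrix.exp_mul_eq_mul_exp_of_mul_eq (M := t • ML) (N := t • MAᵀ)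
    (D := dualityMatrix α) (by rw [Matrix.smul_mul, Matrix.mul_smul, hgen])
  rw [← Matrix.transpose_smul, Matrix.exp_transpose] at hexp
  have hentry := congrFun₂ hexp η x
  simp only [Matrix.mul_apply, Matrix.transpose_apply, dualityMatrix, Matrix.of_apply] at hentry
  simp_rw [mul_comm (NormedSpace.exp (t • MA) x _), ← hentry, Finset.mul_sum]
  refine Finset.sum_congr rfl fun ξ _ => ?_
  field_simp [hα' x]

/-- one-particle self-duality at the level of semigroups.
`ML` is the generator `L` viewed as a matrix indexed by the configuration
space, `MA` is the generator `A` viewed as a matrix indexed by `V`. -/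
theorem one_particle_duality_semigroup {V : Type*} [Fintype V] [DecidableEq V]
    (adj : V → V → Prop) [DecidableRel adj]
    (hsym : ∀ x y, adj x y → adj y x) (hirr : ∀ x, ¬ adj x x)
    (a : ℝ) (ha0 : 0 ≤ a) (ha1 : a ≤ 1)
    (α : V → ℕ) (hα : ∀ x, 1 ≤ α x)
    (ML : Matrix (Conf α) (Conf α) ℝ)
    (hML : ∀ (φ : Conf α → ℝ) (η : Conf α), ∑ ξ : Conf α, ML η ξ * φ ξ = gen α a adj φ η)
    (MA : Matrix V V ℝ)
    (hMA : ∀ (g : V → ℝ) (x : V), ∑ y : V, MA x y * g y = sgen α a adj g x)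
    (t : ℝ) (ht : 0 ≤ t) (η : Conf α) (x : V) :
    ∑ ξ : Conf α, NormedSpace.exp (t • ML) η ξ * ((ξ x : ℕ) : ℝ)
      = (α x : ℝ) *
        ∑ y : V, NormedSpace.exp (t • MA) x y * (((η y : ℕ) : ℝ) / (α y : ℝ)) :=
  one_particle_duality_semigroup_general adj hsym hirr a α hα ML hML MA hMA t η x
end

section
/- Two-particle self-duality at the level of generators: for every η ∈ Ξ and every (x,y) ∈ S, applying the partial exclusion generator L to the function η ↦ D((x,y),η) and evaluating at η yields the same value as applying the two-particle generator A^{(2)} to the function (z,w) ↦ D((z,w),η) and evaluating at (x,y); here D((z,w),η) := (η(z)/α_z) · (η(w) − 1_{z=w})/(α_w − 1_{z=w}) for (z,w) ∈ S, with the convention D((z,w),η) := 0 when z = w and α_z = 1 (such states carry zero rate in A^{(2)}). -/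
open scoped BigOperators

/-- The two-particle generator `A^{(2)}` of two interacting BTM(a) particles. -/
noncomputable def gen2 {V : Type*} [Fintype V] [DecidableEq V] (α : V → ℕ) (a : ℝ)
    (adj : V → V → Prop) [DecidableRel adj] (h : V → V → ℝ) (z w : V) : ℝ :=
  (α z : ℝ) ^ (a - 1) *
      (∑ u : V, if adj z u then
        (α u : ℝ) ^ a * (1 - (if u = w then 1 else 0) / (α u : ℝ)) * (h u w - h z w)
      else 0)
    + (α w : ℝ) ^ (a - 1) *
      (∑ u : V, if adj w u then
        (α u : ℝ) ^ a * (1 - (if u = z then 1 else 0) / (α u : ℝ)) * (h z u - h z w)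
      else 0)

/-- The two-particle duality function `D((z,w), η)`, with the convention that
it vanishes when `z = w` and `α z = 1` (such states carry zero rate). -/
noncomputable def D2 {V : Type*} [DecidableEq V] (α : V → ℕ) (η : Conf α) (z w : V) : ℝ :=
  if z = w ∧ α z = 1 then 0
  else (((η z : ℕ) : ℝ) / (α z : ℝ)) *
    ((((η w : ℕ) : ℝ) - (if z = w then 1 else 0)) /
      ((α w : ℝ) - (if z = w then 1 else 0)))

/-!
Both generators are sums over directed edges `z → w`: for `L` the jump of a particle along it,
for `A^{(2)}` the jump of the particle at `x` (if `z = x`) or at `y` (if `z = y`) to `w`. Since `∼`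
is symmetric it suffices to match the two orientations of every edge, which is a rational
identity in the occupation numbers; edges away from `{x, y}` contribute nothing on either side.
The convention `D((y,y),η) = 0` for `α y = 1` only enters on the edge `{x, y}`, where
`A^{(2)}` kills it by the factor `1 - 1/α y` and `L` matches that because `η y ∈ {0, 1}`.
-/

open Finset

section Edges

variable {V : Type*} {α : V → ℕ} {a : ℝ} {f : V → ℝ}

def occ (η : Conf α) (u : V) : ℝ := ((η u : ℕ) : ℝ)

lemma occ_mul_occ_sub_one (η : Conf α) {u : V} (hu : α u = 1) : occ η u * (occ η u - 1) = 0 := by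
  have : (η u : ℕ) = 0 ∨ (η u : ℕ) = 1 := by have := (η u).isLt; omega
  rcases this with h | h <;> simp [occ, h]

variable (α a f) in
noncomputable def jumpRatePoly (z w : V) : ℝ :=
  f z * (α z : ℝ) ^ (a - 1) * (α w : ℝ) ^ a * (1 - f w / (α w : ℝ))

lemma jumpRate_eq_jumpRatePoly (η : Conf α) : jumpRate α a η = jumpRatePoly α a (occ η) := rfl

variable [DecidableEq V]

lemma occ_move (η : Conf α) {z w : V} (hzw : z ≠ w) (hz : (η z : ℕ) ≠ 0)
    (hw : (η w : ℕ) < α w) :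
    occ (move α η z w) = occ η - Pi.single z 1 + Pi.single w 1 := by
  funext u
  rcases eq_or_ne u z with rfl | huz
  · simp [occ, move, hzw, Nat.cast_sub (Nat.one_le_iff_ne_zero.2 hz)]
  rcases eq_or_ne u w with rfl | huw
  · simp [occ, move, huz, min_eq_left (Nat.succ_le_of_lt hw)]
  · simp [occ, move, huz, huw]

variable (α) in
noncomputable def dualPoly (f : V → ℝ) (z w : V) : ℝ :=
  if z = w ∧ α z = 1 then 0
  else (f z / (α z : ℝ)) *
    ((f w - (if z = w then 1 else 0)) / ((α w : ℝ) - (if z = w then 1 else 0)))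

lemma D2_eq_dualPoly (η : Conf α) : D2 α η = dualPoly α (occ η) := rfl

lemma dualPoly_of_ne {x y : V} (h : x ≠ y) : dualPoly α f x y = f x / α x * (f y / α y) := by
  simp [dualPoly, h]

lemma dualPoly_self {x : V} (h : α x ≠ 1) :
    dualPoly α f x x = f x / α x * ((f x - 1) / (α x - 1)) := by
  simp [dualPoly, h]

lemma one_sub_inv_mul_dualPoly_self {x : V} (hα : 1 ≤ α x)
    (hf : α x = 1 → f x * (f x - 1) = 0) :
    (1 - 1 / (α x : ℝ)) * dualPoly α f x x = f x * (f x - 1) / (α x : ℝ) ^ 2 := by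
  rcases eq_or_ne (α x) 1 with h | h
  · simp [dualPoly, h, hf h]
  · have h1 : (α x : ℝ) - 1 ≠ 0 := sub_ne_zero.2 (by exact_mod_cast h)
    have h0 : (α x : ℝ) ≠ 0 := by positivity
    rw [dualPoly_self h]
    field_simp

variable (α a f)

noncomputable def genEdge (x y z w : V) : ℝ :=
  jumpRatePoly α a f z w * (dualPoly α (f - Pi.single z 1 + Pi.single w 1) x y - dualPoly α f x y)

noncomputable def gen2Edge (h : V → V → ℝ) (x y z w : V) : ℝ :=
  (if z = x then
      (α x : ℝ) ^ (a - 1) * ((α w : ℝ) ^ a * (1 - (if w = y then 1 else 0) / (α w : ℝ)) *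
        (h w y - h x y)) else 0) +
    (if z = y then
      (α y : ℝ) ^ (a - 1) * ((α w : ℝ) ^ a * (1 - (if w = x then 1 else 0) / (α w : ℝ)) *
        (h x w - h x y)) else 0)

variable {α a f}

lemma jumpRate_mul_sub_move (η : Conf α) {z w : V} (hzw : z ≠ w) (hw : α w ≠ 0) (x y : V) :
    jumpRate α a η z w * (D2 α (move α η z w) x y - D2 α η x y) = genEdge α a (occ η) x y z w := by
  rw [jumpRate_eq_jumpRatePoly]
  by_cases hz : (η z : ℕ) = 0
  · simp [jumpRatePoly, genEdge, occ, hz]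
  by_cases hfull : (η w : ℕ) = α w
  · simp [jumpRatePoly, genEdge, occ, hfull, hw]
  rw [genEdge, D2_eq_dualPoly, D2_eq_dualPoly,
    occ_move η hzw hz (lt_of_le_of_ne (Nat.lt_succ_iff.mp (η w).isLt) hfull)]

lemma genEdge_eq_zero {x y z w : V} (hzx : z ≠ x) (hzy : z ≠ y) (hwx : w ≠ x) (hwy : w ≠ y) :
    genEdge α a f x y z w = 0 := by
  have : (f - Pi.single z 1 + Pi.single w 1 : V → ℝ) x = f x ∧
      (f - Pi.single z 1 + Pi.single w 1 : V → ℝ) y = f y := by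
    simp [hzx.symm, hzy.symm, hwx.symm, hwy.symm]
  simp [genEdge, dualPoly, this]

lemma gen2Edge_eq_zero (h : V → V → ℝ) {x y z : V} (hzx : z ≠ x) (hzy : z ≠ y) (w : V) :
    gen2Edge α a h x y z w = 0 := by
  simp [gen2Edge, hzx, hzy]

lemma genEdge_add_swap_of_ne_of_ne (hα : ∀ v, 1 ≤ α v) {x y z u : V} (hxy : x ≠ y)
    (hz : z = x ∨ z = y) (hux : u ≠ x) (huy : u ≠ y) :
    genEdge α a f x y z u + genEdge α a f x y u z = gen2Edge α a (dualPoly α f) x y z u := by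
  have hx : (α x : ℝ) ≠ 0 := by have := hα x; positivity
  have hy : (α y : ℝ) ≠ 0 := by have := hα y; positivity
  have hu : (α u : ℝ) ≠ 0 := by have := hα u; positivity
  rcases hz with rfl | rfl <;>
  · simp only [genEdge, gen2Edge, jumpRatePoly, ne_eq, not_false_eq_true, Real.rpow_sub_one,
      Pi.add_apply, Pi.sub_apply, Pi.single_eq_same, Pi.single_eq_of_ne, ↓reduceIte, add_zero,
      zero_add, sub_zero, zero_div, mul_one, dualPoly_of_ne, hxy, hxy.symm, hux, huy, hux.symm,
      huy.symm, hx, hy, hu]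
    field_simp
    ring

lemma genEdge_add_swap_diag (hα : ∀ v, 1 ≤ α v) {x u : V} (hx2 : 2 ≤ α x) (hux : u ≠ x) :
    genEdge α a f x x x u + genEdge α a f x x u x = gen2Edge α a (dualPoly α f) x x x u := by
  have hx : (α x : ℝ) ≠ 0 := by positivity
  have hu : (α u : ℝ) ≠ 0 := by have := hα u; positivity
  have hx1 : α x ≠ 1 := by omega
  have hx1' : (α x : ℝ) - 1 ≠ 0 := sub_ne_zero.2 (by exact_mod_cast hx1)
  simp only [genEdge, gen2Edge, jumpRatePoly, ne_eq, not_false_eq_true, Real.rpow_sub_one,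
    Pi.add_apply, Pi.sub_apply, Pi.single_eq_same, Pi.single_eq_of_ne, ↓reduceIte, add_zero,
    sub_zero, zero_div, mul_one, add_sub_cancel_right, dualPoly_of_ne, dualPoly_self, hx1, hux,
    hux.symm, hx, hu]
  field_simp
  ring

lemma genEdge_add_swap_xy (hα : ∀ v, 1 ≤ α v) (hf : ∀ v, α v = 1 → f v * (f v - 1) = 0)
    {x y : V} (hxy : x ≠ y) :
    genEdge α a f x y x y + genEdge α a f x y y x
      = gen2Edge α a (dualPoly α f) x y x y + gen2Edge α a (dualPoly α f) x y y x := by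
  have hx : (α x : ℝ) ≠ 0 := by have := hα x; positivity
  have hy : (α y : ℝ) ≠ 0 := by have := hα y; positivity
  have hxx : (1 - 1 / (α x : ℝ)) * (dualPoly α f x x - dualPoly α f x y)
      = f x * (f x - 1) / (α x : ℝ) ^ 2 - (1 - 1 / (α x : ℝ)) * dualPoly α f x y := by
    rw [mul_sub, one_sub_inv_mul_dualPoly_self (hα x) (hf x)]
  have hyy : (1 - 1 / (α y : ℝ)) * (dualPoly α f y y - dualPoly α f x y)
      = f y * (f y - 1) / (α y : ℝ) ^ 2 - (1 - 1 / (α y : ℝ)) * dualPoly α f x y := by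
    rw [mul_sub, one_sub_inv_mul_dualPoly_self (hα y) (hf y)]
  simp only [gen2Edge, if_pos, if_neg hxy, if_neg hxy.symm, mul_assoc, hxx, hyy]
  simp only [genEdge, jumpRatePoly, ne_eq, not_false_eq_true, Real.rpow_sub_one, Pi.add_apply,
    Pi.sub_apply, Pi.single_eq_same, Pi.single_eq_of_ne, add_zero, sub_zero, zero_add, one_div,
    dualPoly_of_ne, hxy, hxy.symm, hx, hy]
  field_simp
  ring

lemma genEdge_add_swap (hα : ∀ v, 1 ≤ α v) (hf : ∀ v, α v = 1 → f v * (f v - 1) = 0)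
    {x y : V} (hS : x ≠ y ∨ 2 ≤ α x) {z w : V} (hzw : z ≠ w) :
    genEdge α a f x y z w + genEdge α a f x y w z
      = gen2Edge α a (dualPoly α f) x y z w + gen2Edge α a (dualPoly α f) x y w z := by
  wlog hz : z = x ∨ z = y generalizing z w
  · simp only [not_or] at hz
    by_cases hw : w = x ∨ w = y
    · rw [add_comm, this hzw.symm hw, add_comm]
    · simp only [not_or] at hw
      rw [genEdge_eq_zero hz.1 hz.2 hw.1 hw.2, genEdge_eq_zero hw.1 hw.2 hz.1 hz.2,
        gen2Edge_eq_zero _ hz.1 hz.2, gen2Edge_eq_zero _ hw.1 hw.2]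
  rcases eq_or_ne x y with rfl | hxy
  · obtain rfl : z = x := hz.elim id id
    rw [gen2Edge_eq_zero _ hzw.symm hzw.symm, add_zero]
    exact genEdge_add_swap_diag hα (hS.resolve_left (not_not.2 rfl)) hzw.symm
  by_cases hw : w = x ∨ w = y
  · rcases hz with rfl | rfl <;> rcases hw with rfl | rfl
    · exact absurd rfl hzw
    · exact genEdge_add_swap_xy hα hf hxy
    · rw [add_comm, add_comm (gen2Edge _ _ _ _ _ _ _)]
      exact genEdge_add_swap_xy hα hf hxy
    · exact absurd rfl hzw
  · simp only [not_or] at hw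
    rw [gen2Edge_eq_zero _ hw.1 hw.2, add_zero]
    exact genEdge_add_swap_of_ne_of_ne hα hxy hz hw.1 hw.2

end Edges

section Sums

variable {V : Type*} [Fintype V] {adj : V → V → Prop} [DecidableRel adj]

lemma sum_sum_ite_eq_of_add_swap (hsym : ∀ z w, adj z w → adj w z) {P Q : V → V → ℝ}
    (h : ∀ z w, adj z w → P z w + P w z = Q z w + Q w z) :
    ∑ z, ∑ w, (if adj z w then P z w else 0) = ∑ z, ∑ w, (if adj z w then Q z w else 0) := by
  have hadj : ∀ z w, adj w z ↔ adj z w := fun z w => ⟨hsym w z, hsym z w⟩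
  have two_mul_eq : ∀ R : V → V → ℝ, 2 * ∑ z, ∑ w, (if adj z w then R z w else 0)
      = ∑ z, ∑ w, (if adj z w then R z w + R w z else 0) := fun R => by
    rw [two_mul]
    nth_rewrite 2 [Finset.sum_comm]
    simp only [← sum_add_distrib, hadj, ← ite_add_zero]
  refine mul_left_cancel₀ (two_ne_zero (α := ℝ)) ?_
  rw [two_mul_eq, two_mul_eq]
  exact sum_congr rfl fun z _ => sum_congr rfl fun w _ => ite_congr rfl (h z w) fun _ => rfl

variable [DecidableEq V] {α : V → ℕ} {a : ℝ}

lemma gen_eq_sum_sum (hirr : ∀ x, ¬ adj x x) (hα : ∀ x, 1 ≤ α x) (η : Conf α) (x y : V) :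
    gen α a adj (fun ξ => D2 α ξ x y) η
      = ∑ z, ∑ w, if adj z w then genEdge α a (occ η) x y z w else 0 :=
  sum_congr rfl fun z _ => sum_congr rfl fun w _ => ite_congr rfl
    (fun hzw => jumpRate_mul_sub_move η (by rintro rfl; exact hirr z hzw)
      (Nat.one_le_iff_ne_zero.1 (hα w)) x y)
    fun _ => rfl

lemma gen2_eq_sum_sum (h : V → V → ℝ) (x y : V) :
    gen2 α a adj h x y = ∑ z, ∑ w, if adj z w then gen2Edge α a h x y z w else 0 := by
  simp only [gen2, gen2Edge, ite_add_zero, sum_add_distrib, mul_sum, mul_ite, mul_zero,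
    ← ite_and]
  simp only [and_comm (a := adj _ _), ite_and, sum_ite_irrel, sum_const_zero, sum_ite_eq',
    mem_univ, if_true]

end Sums

theorem two_particle_duality_general {V : Type*} [Fintype V] [DecidableEq V]
    (adj : V → V → Prop) [DecidableRel adj]
    (hsym : ∀ x y, adj x y → adj y x) (hirr : ∀ x, ¬ adj x x)
    (a : ℝ)
    (α : V → ℕ) (hα : ∀ x, 1 ≤ α x)
    (η : Conf α) (x y : V) (hS : x ≠ y ∨ 2 ≤ α x) :
    gen α a adj (fun ξ => D2 α ξ x y) η
      = gen2 α a adj (fun z w => D2 α η z w) x y := by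
  rw [gen_eq_sum_sum hirr hα, gen2_eq_sum_sum, D2_eq_dualPoly]
  exact sum_sum_ite_eq_of_add_swap hsym fun z w hzw =>
    genEdge_add_swap hα (fun _ => occ_mul_occ_sub_one η) hS (by rintro rfl; exact hirr z hzw)

/-- two-particle self-duality at the level of generators. -/
theorem two_particle_duality {V : Type*} [Fintype V] [DecidableEq V]
    (adj : V → V → Prop) [DecidableRel adj]
    (hsym : ∀ x y, adj x y → adj y x) (hirr : ∀ x, ¬ adj x x)
    (a : ℝ) (ha0 : 0 ≤ a) (ha1 : a ≤ 1)
    (α : V → ℕ) (hα : ∀ x, 1 ≤ α x)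
    (η : Conf α) (x y : V) (hS : x ≠ y ∨ 2 ≤ α x) :
    gen α a adj (fun ξ => D2 α ξ x y) η
      = gen2 α a adj (fun z w => D2 α η z w) x y :=
  two_particle_duality_general adj hsym hirr a α hα η x y hS
end

section
/- Generator difference identity for two interacting versus two independent particles: for every g : V → ℝ and every (z,w) ∈ V×V, (A^{(2)} − A⊕A)(g⊗g)(z,w) = −1_{z∼w} · α_z^{a−1} · α_w^{a−1} · (g(z) − g(w))²; in particular this quantity is always ≤ 0. -/
open scoped BigOperators

/-!
The interaction only enters through the factor `1 - 1_{u=w}/α_u`, which removes, from each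
particle's jumps, a fraction `1/α` of the jump onto the other particle's site. Hence `A^{(2)}`
is `A ⊕ A` minus two exclusion terms, present only when `z ∼ w`, with common weight
`α_z^{a-1} α_w^{a-1}` (using `α^a / α = α^{a-1}`). For `h = g ⊗ g` these two terms are
`g(w)² - g(z)g(w)` and `g(z)² - g(z)g(w)`, which add up to `(g(z) - g(w))²`.
-/

section

variable {V : Type*} [Fintype V] [DecidableEq V] (adj : V → V → Prop) [DecidableRel adj]
  (α : V → ℕ) (a : ℝ)

lemma sum_adj_exclusion_eq (p q : V) (f : V → ℝ) :
    (∑ u : V, if adj p u then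
        (α u : ℝ) ^ a * (1 - (if u = q then 1 else 0) / (α u : ℝ)) * f u
      else 0)
    = (∑ u : V, if adj p u then (α u : ℝ) ^ a * f u else 0)
      - (if adj p q then (α q : ℝ) ^ a / (α q : ℝ) * f q else 0) := by
  rw [← Fintype.sum_ite_eq' q (fun u => if adj p u then (α u : ℝ) ^ a / (α u : ℝ) * f u else 0),
    ← Finset.sum_sub_distrib]
  refine Finset.sum_congr rfl fun u _ => ?_
  obtain rfl | huq := eq_or_ne u q
  · split_ifs <;> ring
  · by_cases hpu : adj p u <;> simp [hpu, huq]

lemma gen2_eq_sgen_add_sgen_sub (h : V → V → ℝ) (z w : V) :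
    gen2 α a adj h z w
      = sgen α a adj (fun u => h u w) z + sgen α a adj (fun v => h z v) w
        - ((if adj z w then (α z : ℝ) ^ (a - 1) * ((α w : ℝ) ^ a / α w) * (h w w - h z w) else 0)
          + (if adj w z then (α w : ℝ) ^ (a - 1) * ((α z : ℝ) ^ a / α z) * (h z z - h z w)
            else 0)) := by
  unfold gen2 sgen
  rw [sum_adj_exclusion_eq adj α a z w (fun u => h u w - h z w),
    sum_adj_exclusion_eq adj α a w z (fun u => h z u - h z w)]
  split_ifs <;> ring

lemma gen2_mul_sub_sgen_mul (hsym : ∀ x y, adj x y → adj y x) (g : V → ℝ) {z w : V}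
    (hz : (α z : ℝ) ≠ 0) (hw : (α w : ℝ) ≠ 0) :
    gen2 α a adj (fun u v => g u * g v) z w
        - (sgen α a adj (fun u => g u * g w) z + sgen α a adj (fun v => g z * g v) w)
      = -((if adj z w then 1 else 0) * (α z : ℝ) ^ (a - 1) * (α w : ℝ) ^ (a - 1) *
          (g z - g w) ^ 2) := by
  rw [gen2_eq_sgen_add_sgen_sub, ← Real.rpow_sub_one hz, ← Real.rpow_sub_one hw]
  by_cases hzw : adj z w
  · simp only [hzw, hsym z w hzw, if_true]
    ring
  · simp only [hzw, mt (hsym w z) hzw, if_false]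
    ring

end

theorem gen_difference_general {V : Type*} [Fintype V] [DecidableEq V]
    (adj : V → V → Prop) [DecidableRel adj]
    (hsym : ∀ x y, adj x y → adj y x)
    (a : ℝ)
    (α : V → ℕ) (hα : ∀ x, 1 ≤ α x)
    (g : V → ℝ) (z w : V) :
    gen2 α a adj (fun u v => g u * g v) z w
        - (sgen α a adj (fun u => g u * g w) z + sgen α a adj (fun v => g z * g v) w)
      = -((if adj z w then 1 else 0) * (α z : ℝ) ^ (a - 1) * (α w : ℝ) ^ (a - 1) *
          (g z - g w) ^ 2)
    ∧ gen2 α a adj (fun u v => g u * g v) z w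
        - (sgen α a adj (fun u => g u * g w) z + sgen α a adj (fun v => g z * g v) w)
      ≤ 0 := by
  have hα_ne (x : V) : (α x : ℝ) ≠ 0 := Nat.cast_ne_zero.mpr (by have := hα x; omega)
  have key := gen2_mul_sub_sgen_mul adj α a hsym g (hα_ne z) (hα_ne w)
  refine ⟨key, key ▸ neg_nonpos.mpr ?_⟩
  positivity

/-- generator difference identity for two interacting versus two
independent particles, and its non-positivity. -/
theorem gen_difference {V : Type*} [Fintype V] [DecidableEq V]
    (adj : V → V → Prop) [DecidableRel adj]
    (hsym : ∀ x y, adj x y → adj y x) (hirr : ∀ x, ¬ adj x x)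
    (a : ℝ) (ha0 : 0 ≤ a) (ha1 : a ≤ 1)
    (α : V → ℕ) (hα : ∀ x, 1 ≤ α x)
    (g : V → ℝ) (z w : V) :
    gen2 α a adj (fun u v => g u * g v) z w
        - (sgen α a adj (fun u => g u * g w) z + sgen α a adj (fun v => g z * g v) w)
      = -((if adj z w then 1 else 0) * (α z : ℝ) ^ (a - 1) * (α w : ℝ) ^ (a - 1) *
          (g z - g w) ^ 2)
    ∧ gen2 α a adj (fun u v => g u * g v) z w
        - (sgen α a adj (fun u => g u * g w) z + sgen α a adj (fun v => g z * g v) w)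
      ≤ 0 :=
  gen_difference_general adj hsym a α hα g z w
end

section
/- Variance estimate by negative dependence (finite-volume version of Proposition 3.1): for every η ∈ Ξ, every t ≥ 0, and every f : V → ℝ, E_η[(Σ_{x∈V} f(x) η_t(x) − Σ_{x∈V} η(x) (P_t f)(x))²] ≤ Σ_{x∈V} η(x) · [P_t(f²)(x) − (P_t f(x))²], where P_t := exp(tA) is the matrix exponential of the single-particle generator A, and E_η[F(η_t)] := Σ_{ξ∈Ξ} (exp(tL))(η,ξ) F(ξ) denotes the expectation of the partial exclusion process started from η, with exp(tL) the matrix exponential of L viewed as a matrix indexed by Ξ. -/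
open scoped BigOperators

/-!
Let `g s = P_{t-s} f`, `w s = P_{t-s} f²`, `c = Σ η(x) P_t f(x)` and
`Φ s ξ = (Σ g s(x) ξ(x) - c)² + Σ ξ(x) (w s(x) - g s(x)²)`. Since `∂ₛ g s = -A g s`, the
generator bound `L (Φ s) ≤ -∂ₛ Φ s` makes `s ↦ E_η[Φ s (η_s)]` non-increasing on `[0, t]`
(`exp (s L)` has nonnegative entries); its values at `s = t` and `s = 0` are the two sides.
The generator bound rests on two features of partial exclusion: on linear observables `L` acts
through `A`, because the exclusion correction to the rates is symmetric in the two sites; and the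
rates are dominated by those of independent walkers, so the quadratic variation of a linear
observable is at most the independent one (negative dependence).
-/

open NormedSpace

namespace Matrix

variable {ι : Type*} [Fintype ι] [DecidableEq ι]

theorem exp_apply_nonneg {N : Matrix ι ι ℝ} (hN : ∀ i j, 0 ≤ N i j) (i j : ι) :
    0 ≤ exp N i j := by
  open scoped Norms.Operator in
  exact (Pi.hasSum.1 (Pi.hasSum.1 (exp_series_hasSum_exp' (𝕂 := ℝ) N) i) j).nonneg fun k =>
    mul_nonneg (by positivity) (pow_apply_nonneg hN k i j)

theorem exp_smul_apply_nonneg {M : Matrix ι ι ℝ} (hM : ∀ i j, i ≠ j → 0 ≤ M i j) {s : ℝ}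
    (hs : 0 ≤ s) (i j : ι) : 0 ≤ exp (s • M) i j := by
  -- `M + c • 1` is entrywise nonnegative, and the scalar shift only contributes a factor `e^(-sc)`
  set c := ∑ k, |M k k|
  have hshift : ∀ i j, 0 ≤ (s • (M + c • 1)) i j := by
    intro i j
    refine mul_nonneg hs ?_
    rcases eq_or_ne i j with rfl | hij
    · have : |M i i| ≤ c := Finset.single_le_sum (f := fun k => |M k k|)
        (fun _ _ => abs_nonneg _) (Finset.mem_univ i)
      simp only [add_apply, smul_apply, one_apply_eq, smul_eq_mul, mul_one]
      linarith [neg_abs_le (M i i)]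
    · simpa [one_apply_ne hij] using hM i j hij
  have hsplit : s • M = s • (M + c • 1) + algebraMap ℝ _ (-(s * c)) := by
    rw [Algebra.algebraMap_eq_smul_one]; module
  have hscalar : exp (algebraMap ℝ (Matrix ι ι ℝ) (-(s * c)))
      = algebraMap ℝ (Matrix ι ι ℝ) (Real.exp (-(s * c))) := by
    open scoped Norms.Operator in
    rw [Real.exp_eq_exp_ℝ]
    exact (algebraMap_exp_comm _).symm
  rw [hsplit, exp_add_of_commute _ _ (Algebra.commute_algebraMap_right _ _), hscalar,
    ← Algebra.commutes, ← Algebra.smul_def, smul_apply, smul_eq_mul]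
  exact mul_nonneg (Real.exp_nonneg _) (exp_apply_nonneg hshift i j)

theorem hasDerivAt_exp_smul_apply (M : Matrix ι ι ℝ) (s : ℝ) (i j : ι) :
    HasDerivAt (fun u : ℝ => exp (u • M) i j) ((exp (s • M) * M) i j) s := by
  open scoped Norms.Operator in
  exact (entryLinearMap ℝ ℝ i j).toContinuousLinearMap.hasFDerivAt.comp_hasDerivAt s
    (hasDerivAt_exp_smul_const M s)

theorem hasDerivAt_exp_smul_mulVec_apply (M : Matrix ι ι ℝ) {Φ Φ' : ℝ → ι → ℝ} {s : ℝ}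
    (hΦ : ∀ j, HasDerivAt (fun s => Φ s j) (Φ' s j) s) (i : ι) :
    HasDerivAt (fun s => (exp (s • M) *ᵥ Φ s) i) ((exp (s • M) *ᵥ (M *ᵥ Φ s + Φ' s)) i) s := by
  have := HasDerivAt.fun_sum fun j (_ : j ∈ Finset.univ) =>
    (hasDerivAt_exp_smul_apply M s i j).mul (hΦ j)
  refine this.congr_deriv ?_
  rw [mulVec_add, mulVec_mulVec]
  simp only [Pi.add_apply, mulVec, dotProduct, Finset.sum_add_distrib]

theorem hasDerivAt_exp_sub_smul_mulVec (M : Matrix ι ι ℝ) (v : ι → ℝ) (t s : ℝ) :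
    HasDerivAt (fun s => exp ((t - s) • M) *ᵥ v) (-(M *ᵥ (exp ((t - s) • M) *ᵥ v))) s := by
  refine hasDerivAt_pi.2 fun i => ?_
  have := HasDerivAt.fun_sum fun j (_ : j ∈ Finset.univ) =>
    ((hasDerivAt_exp_smul_apply M (t - s) i j).comp s
      ((hasDerivAt_id s).const_sub t)).mul_const (v j)
  refine this.congr_deriv ?_
  rw [mulVec_mulVec, ← ((Commute.refl M).smul_right (t - s)).exp_right.eq]
  simp [mulVec, dotProduct]

theorem exp_smul_mulVec_apply_le {M : Matrix ι ι ℝ} (hM : ∀ i j, i ≠ j → 0 ≤ M i j)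
    {Φ Φ' : ℝ → ι → ℝ} (hΦ : ∀ s j, HasDerivAt (fun s => Φ s j) (Φ' s j) s) {t : ℝ}
    (hle : ∀ s ∈ Set.Ioo 0 t, M *ᵥ Φ s + Φ' s ≤ 0) (ht : 0 ≤ t) (i : ι) :
    (exp (t • M) *ᵥ Φ t) i ≤ Φ 0 i := by
  have hderiv s := hasDerivAt_exp_smul_mulVec_apply M (hΦ s) i
  have hanti : AntitoneOn (fun s => (exp (s • M) *ᵥ Φ s) i) (Set.Icc 0 t) := by
    refine antitoneOn_of_deriv_nonpos (convex_Icc 0 t)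
      (fun s _ => (hderiv s).continuousAt.continuousWithinAt)
      (fun s _ => (hderiv s).differentiableAt.differentiableWithinAt) fun s hs => ?_
    rw [interior_Icc] at hs
    rw [(hderiv s).deriv]
    exact Finset.sum_nonpos fun j _ =>
      mul_nonpos_of_nonneg_of_nonpos (exp_smul_apply_nonneg hM hs.1.le i j) (hle s hs j)
  simpa using hanti (Set.left_mem_Icc.2 ht) (Set.right_mem_Icc.2 ht) ht

end Matrix

open Matrix

theorem HasDerivAt.dotProduct_const {ι : Type*} [Fintype ι] {g : ℝ → ι → ℝ} {g' : ι → ℝ}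
    {s : ℝ} (hg : HasDerivAt g g' s) (v : ι → ℝ) :
    HasDerivAt (fun s => g s ⬝ᵥ v) (g' ⬝ᵥ v) s :=
  HasDerivAt.fun_sum fun i _ => (hasDerivAt_pi.1 hg i).mul_const (v i)

theorem hasDerivAt_sq_add_dotProduct {ι : Type*} [Fintype ι] {g w : ℝ → ι → ℝ}
    {g' w' : ι → ℝ} {s : ℝ} (hg : HasDerivAt g g' s) (hw : HasDerivAt w w' s) (v : ι → ℝ)
    (c : ℝ) :
    HasDerivAt (fun s => (g s ⬝ᵥ v - c) ^ 2 + (w s - g s ^ 2) ⬝ᵥ v)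
      (2 * (g s ⬝ᵥ v - c) * (g' ⬝ᵥ v) + (w' - 2 • (g s * g')) ⬝ᵥ v) s := by
  have h1 := ((hg.dotProduct_const v).sub_const c).pow 2
  have h2 := (hw.sub (hg.pow 2)).dotProduct_const v
  refine (h1.add h2).congr_deriv ?_
  congr 2
  · norm_num
  · ext i
    simp only [Pi.sub_apply, Pi.mul_apply, Pi.pow_apply, Pi.natCast_apply,
      nsmul_eq_mul]
    ring

theorem Finset.sum_sum_ite_eq_zero_of_antisymm {ι : Type*} [Fintype ι] (r : ι → ι → Prop)
    [DecidableRel r] (hr : ∀ x y, r x y → r y x) (F : ι → ι → ℝ) (hF : ∀ x y, F y x = -F x y) :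
    ∑ x, ∑ y, (if r x y then F x y else 0) = 0 := by
  have hswap : ∑ x, ∑ y, (if r x y then F x y else 0)
      = -∑ x, ∑ y, (if r x y then F x y else 0) := by
    conv_lhs => rw [Finset.sum_comm]
    simp only [← Finset.sum_neg_distrib]
    refine Finset.sum_congr rfl fun x _ => Finset.sum_congr rfl fun y _ => ?_
    by_cases h : r x y
    · rw [if_pos h, if_pos (hr x y h), hF]
    · rw [if_neg h, if_neg (mt (hr y x) h), neg_zero]
  linarith

section PartialExclusion

variable {V : Type*} {α : V → ℕ}

def occupation (ξ : Conf α) : V → ℝ := fun x => ((ξ x : ℕ) : ℝ)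

variable {a : ℝ}

theorem jumpRate_eq (ξ : Conf α) (x : V) {y : V} (hy : 0 < α y) :
    jumpRate α a ξ x y = (ξ x : ℕ) * (α x : ℝ) ^ (a - 1) * (α y : ℝ) ^ a
      - (ξ x : ℕ) * (ξ y : ℕ) * (α x : ℝ) ^ (a - 1) * (α y : ℝ) ^ (a - 1) := by
  rw [jumpRate, Real.rpow_sub_one (x := (α y : ℝ)) (by positivity)]
  field_simp

theorem jumpRate_nonneg (ξ : Conf α) (x y : V) : 0 ≤ jumpRate α a ξ x y := by
  have hy : ((ξ y : ℕ) : ℝ) / α y ≤ 1 :=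
    div_le_one_of_le₀ (by exact_mod_cast Nat.lt_succ_iff.1 (ξ y).isLt) (Nat.cast_nonneg _)
  unfold jumpRate
  have := sub_nonneg.2 hy
  positivity

theorem jumpRate_le (ξ : Conf α) (x : V) {y : V} (hy : 0 < α y) :
    jumpRate α a ξ x y ≤ (ξ x : ℕ) * (α x : ℝ) ^ (a - 1) * (α y : ℝ) ^ a := by
  rw [jumpRate_eq ξ x hy]
  have : (0 : ℝ) ≤ (ξ x : ℕ) * (ξ y : ℕ) * (α x : ℝ) ^ (a - 1) * (α y : ℝ) ^ (a - 1) := by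
    positivity
  linarith

variable [DecidableEq V]

theorem occupation_move (ξ : Conf α) {x y : V} (hxy : x ≠ y) (hx : (ξ x : ℕ) ≠ 0)
    (hy : (ξ y : ℕ) < α y) :
    occupation (move α ξ x y) = occupation ξ + Pi.single y 1 - Pi.single x 1 := by
  funext z
  simp only [occupation, move, Pi.add_apply, Pi.sub_apply]
  rcases eq_or_ne z y with rfl | hzy
  · simp [hxy.symm, Nat.min_eq_left hy]
  · rcases eq_or_ne z x with rfl | hzx
    · simp [hzy, Nat.cast_sub (Nat.one_le_iff_ne_zero.2 hx)]
    · simp [hzy, hzx]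

theorem dotProduct_occupation_move [Fintype V] (u : V → ℝ) (ξ : Conf α) {x y : V} (hxy : x ≠ y)
    (hx : (ξ x : ℕ) ≠ 0) (hy : (ξ y : ℕ) < α y) :
    u ⬝ᵥ occupation (move α ξ x y) = u ⬝ᵥ occupation ξ + u y - u x := by
  rw [occupation_move ξ hxy hx hy, dotProduct_sub, dotProduct_add, dotProduct_single_one,
    dotProduct_single_one]

end PartialExclusion

section Generator

variable {V : Type*} [Fintype V] {adj : V → V → Prop} [DecidableRel adj] {a : ℝ} {α : V → ℕ}

theorem sgen_sub (p q : V → ℝ) : sgen α a adj (p - q) = sgen α a adj p - sgen α a adj q := by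
  funext x
  simp only [sgen, Pi.sub_apply, ← mul_sub, ← Finset.sum_sub_distrib]
  congr 1
  refine Finset.sum_congr rfl fun y _ => ?_
  split_ifs <;> ring

theorem sum_jumpRate_mul_sub (hsym : ∀ x y, adj x y → adj y x) (hα : ∀ x, 1 ≤ α x)
    (ξ : Conf α) (u : V → ℝ) :
    ∑ x, ∑ y, (if adj x y then jumpRate α a ξ x y * (u y - u x) else 0)
      = sgen α a adj u ⬝ᵥ occupation ξ := by
  set B : V → V → ℝ := fun x y => (ξ x : ℕ) * (ξ y : ℕ) * (α x : ℝ) ^ (a - 1) * (α y : ℝ) ^ (a - 1)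
  -- the exclusion correction `B` to the independent rates is symmetric, so its drift cancels
  have hcancel : ∑ x, ∑ y, (if adj x y then B x y * (u y - u x) else 0) = 0 :=
    Finset.sum_sum_ite_eq_zero_of_antisymm adj hsym _ fun x y => by simp only [B]; ring
  have hsplit : ∑ x, ∑ y, (if adj x y then jumpRate α a ξ x y * (u y - u x) else 0)
      = sgen α a adj u ⬝ᵥ occupation ξ
        - ∑ x, ∑ y, (if adj x y then B x y * (u y - u x) else 0) := by
    rw [dotProduct, ← Finset.sum_sub_distrib]
    refine Finset.sum_congr rfl fun x _ => ?_
    simp only [sgen, occupation, Finset.mul_sum, Finset.sum_mul, ← Finset.sum_sub_distrib]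
    refine Finset.sum_congr rfl fun y _ => ?_
    split_ifs
    · rw [jumpRate_eq ξ x (hα y)]; ring
    · ring
  rw [hsplit, hcancel, sub_zero]

theorem sum_jumpRate_mul_sq_le (hα : ∀ x, 1 ≤ α x) (ξ : Conf α) (u : V → ℝ) :
    ∑ x, ∑ y, (if adj x y then jumpRate α a ξ x y * (u y - u x) ^ 2 else 0)
      ≤ (sgen α a adj (u ^ 2) - 2 • (u * sgen α a adj u)) ⬝ᵥ occupation ξ := by
  -- negative dependence: the exclusion rates are dominated by those of independent walkers
  calc _ ≤ ∑ x, ∑ y, (if adj x y then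
          (ξ x : ℕ) * (α x : ℝ) ^ (a - 1) * (α y : ℝ) ^ a * (u y - u x) ^ 2 else 0) := by
        gcongr with x _ y _
        split_ifs
        · exact mul_le_mul_of_nonneg_right (jumpRate_le ξ x (hα y)) (sq_nonneg _)
        · rfl
    _ = _ := by
        rw [dotProduct]
        refine Finset.sum_congr rfl fun x _ => ?_
        simp only [Pi.sub_apply, Pi.smul_apply, Pi.mul_apply]
        simp only [sgen, occupation, Pi.pow_apply, nsmul_eq_mul, Nat.cast_ofNat, Finset.mul_sum,
          ← Finset.sum_sub_distrib, Finset.sum_mul]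
        refine Finset.sum_congr rfl fun y _ => ?_
        split_ifs <;> ring

variable [DecidableEq V]

theorem gen_single_nonneg {ζ ξ : Conf α} (h : ζ ≠ ξ) :
    0 ≤ gen α a adj (Pi.single ξ 1) ζ :=
  Finset.sum_nonneg fun x _ => Finset.sum_nonneg fun y _ => by
    split_ifs
    · rw [Pi.single_eq_of_ne h, sub_zero]
      refine mul_nonneg (jumpRate_nonneg ζ x y) ?_
      rw [Pi.single_apply]
      split_ifs <;> norm_num
    · rfl

theorem gen_eq_sum_of_increment (hirr : ∀ x, ¬ adj x x) (hα : ∀ x, 1 ≤ α x)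
    {φ : Conf α → ℝ} {ξ : Conf α} {D : V → V → ℝ}
    (hD : ∀ x y, x ≠ y → (ξ x : ℕ) ≠ 0 → (ξ y : ℕ) < α y → φ (move α ξ x y) - φ ξ = D x y) :
    gen α a adj φ ξ = ∑ x, ∑ y, if adj x y then jumpRate α a ξ x y * D x y else 0 := by
  refine Finset.sum_congr rfl fun x _ => Finset.sum_congr rfl fun y _ => ?_
  by_cases hxy : adj x y
  · rw [if_pos hxy, if_pos hxy]
    by_cases hx : (ξ x : ℕ) = 0
    · simp [jumpRate, hx]
    by_cases hy : (ξ y : ℕ) = α y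
    · simp [jumpRate, hy, Nat.one_le_iff_ne_zero.1 (hα y)]
    rw [hD x y (fun h => hirr x (h ▸ hxy)) hx
      (lt_of_le_of_ne (Nat.lt_succ_iff.1 (ξ y).isLt) hy)]
  · rw [if_neg hxy, if_neg hxy]

theorem gen_sq_add_dotProduct_le (hsym : ∀ x y, adj x y → adj y x) (hirr : ∀ x, ¬ adj x x)
    (hα : ∀ x, 1 ≤ α x) (u w : V → ℝ) (c : ℝ) (ξ : Conf α) :
    gen α a adj (fun ζ => (u ⬝ᵥ occupation ζ - c) ^ 2 + (w - u ^ 2) ⬝ᵥ occupation ζ) ξ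
      ≤ 2 * (u ⬝ᵥ occupation ξ - c) * (sgen α a adj u ⬝ᵥ occupation ξ)
        + (sgen α a adj w - 2 • (u * sgen α a adj u)) ⬝ᵥ occupation ξ := by
  set U := u ⬝ᵥ occupation ξ
  set v := w - u ^ 2
  rw [gen_eq_sum_of_increment (adj := adj) hirr hα
    (D := fun x y => 2 * (U - c) * (u y - u x) + (u y - u x) ^ 2 + (v y - v x))
    fun x y hxy hx hy => by
      simp only [dotProduct_occupation_move _ ξ hxy hx hy, U]; ring]
  have hsplit : ∑ x, ∑ y, (if adj x y then
        jumpRate α a ξ x y * (2 * (U - c) * (u y - u x) + (u y - u x) ^ 2 + (v y - v x)) else 0)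
      = 2 * (U - c) * ∑ x, ∑ y, (if adj x y then jumpRate α a ξ x y * (u y - u x) else 0)
        + ∑ x, ∑ y, (if adj x y then jumpRate α a ξ x y * (u y - u x) ^ 2 else 0)
        + ∑ x, ∑ y, (if adj x y then jumpRate α a ξ x y * (v y - v x) else 0) := by
    simp only [Finset.mul_sum, ← Finset.sum_add_distrib]
    refine Finset.sum_congr rfl fun x _ => Finset.sum_congr rfl fun y _ => ?_
    split_ifs <;> ring
  rw [hsplit, sum_jumpRate_mul_sub hsym hα, sum_jumpRate_mul_sub hsym hα, sgen_sub]
  have := sum_jumpRate_mul_sq_le (adj := adj) (a := a) hα ξ u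
  simp only [sub_dotProduct] at this ⊢
  linarith

end Generator

theorem variance_estimate_general {V : Type*} [Fintype V] [DecidableEq V]
    (adj : V → V → Prop) [DecidableRel adj]
    (hsym : ∀ x y, adj x y → adj y x) (hirr : ∀ x, ¬ adj x x)
    (a : ℝ)
    (α : V → ℕ) (hα : ∀ x, 1 ≤ α x)
    (ML : Matrix (Conf α) (Conf α) ℝ)
    (hML : ∀ (φ : Conf α → ℝ) (η : Conf α), ∑ ξ : Conf α, ML η ξ * φ ξ = gen α a adj φ η)
    (MA : Matrix V V ℝ)
    (hMA : ∀ (g : V → ℝ) (x : V), ∑ y : V, MA x y * g y = sgen α a adj g x)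
    (t : ℝ) (ht : 0 ≤ t) (η : Conf α) (f : V → ℝ) :
    ∑ ξ : Conf α, NormedSpace.exp (t • ML) η ξ *
        (∑ x : V, f x * ((ξ x : ℕ) : ℝ)
          - ∑ x : V, ((η x : ℕ) : ℝ) * Matrix.mulVec (NormedSpace.exp (t • MA)) f x) ^ 2
      ≤ ∑ x : V, ((η x : ℕ) : ℝ) *
          (Matrix.mulVec (NormedSpace.exp (t • MA)) (fun y => f y ^ 2) x
            - (Matrix.mulVec (NormedSpace.exp (t • MA)) f x) ^ 2) := by
  have hL (φ : Conf α → ℝ) : ML *ᵥ φ = gen α a adj φ := funext (hML φ)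
  have hA (g : V → ℝ) : MA *ᵥ g = sgen α a adj g := funext (hMA g)
  have hMetzler (ζ ξ : Conf α) (h : ζ ≠ ξ) : 0 ≤ ML ζ ξ := by
    simpa [← hL, mulVec_single_one] using gen_single_nonneg (adj := adj) (a := a) h
  set c := occupation η ⬝ᵥ (exp (t • MA) *ᵥ f)
  set g : ℝ → V → ℝ := fun s => exp ((t - s) • MA) *ᵥ f
  set w : ℝ → V → ℝ := fun s => exp ((t - s) • MA) *ᵥ f ^ 2
  set Φ : ℝ → Conf α → ℝ := fun s ξ =>
    (g s ⬝ᵥ occupation ξ - c) ^ 2 + (w s - g s ^ 2) ⬝ᵥ occupation ξ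
  have key := exp_smul_mulVec_apply_le hMetzler (Φ := Φ)
    (fun s ξ => hasDerivAt_sq_add_dotProduct (hasDerivAt_exp_sub_smul_mulVec MA f t s)
      (hasDerivAt_exp_sub_smul_mulVec MA (f ^ 2) t s) (occupation ξ) c)
    (fun s _ ξ => by
      have : gen α a adj (Φ s) ξ ≤ _ := gen_sq_add_dotProduct_le hsym hirr hα (g s) (w s) c ξ
      rw [Pi.add_apply, hL, Pi.zero_apply]
      simp only [hA, g, w, neg_dotProduct, sub_dotProduct, mul_neg, smul_neg,
        nsmul_eq_mul] at this ⊢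
      linarith)
    ht η
  have hΦt : Φ t = fun ξ => (f ⬝ᵥ occupation ξ - c) ^ 2 := by
    simp [Φ, g, w]
  have hΦ0 : Φ 0 η = occupation η ⬝ᵥ (exp (t • MA) *ᵥ f ^ 2 - (exp (t • MA) *ᵥ f) ^ 2) := by
    simp [Φ, g, w, c, dotProduct_comm]
  rw [hΦt, hΦ0] at key
  exact key

/-- variance estimate by negative dependence (finite-volume
version of Proposition 3.1).  `ML` is the partial exclusion generator `L`
viewed as a matrix indexed by the configuration space, `MA` is the
single-particle generator `A` viewed as a matrix indexed by `V`, and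
`P_t = exp (t • MA)` acts on functions by matrix-vector multiplication. -/
theorem variance_estimate {V : Type*} [Fintype V] [DecidableEq V]
    (adj : V → V → Prop) [DecidableRel adj]
    (hsym : ∀ x y, adj x y → adj y x) (hirr : ∀ x, ¬ adj x x)
    (a : ℝ) (ha0 : 0 ≤ a) (ha1 : a ≤ 1)
    (α : V → ℕ) (hα : ∀ x, 1 ≤ α x)
    (ML : Matrix (Conf α) (Conf α) ℝ)
    (hML : ∀ (φ : Conf α → ℝ) (η : Conf α), ∑ ξ : Conf α, ML η ξ * φ ξ = gen α a adj φ η)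
    (MA : Matrix V V ℝ)
    (hMA : ∀ (g : V → ℝ) (x : V), ∑ y : V, MA x y * g y = sgen α a adj g x)
    (t : ℝ) (ht : 0 ≤ t) (η : Conf α) (f : V → ℝ) :
    ∑ ξ : Conf α, NormedSpace.exp (t • ML) η ξ *
        (∑ x : V, f x * ((ξ x : ℕ) : ℝ)
          - ∑ x : V, ((η x : ℕ) : ℝ) * Matrix.mulVec (NormedSpace.exp (t • MA)) f x) ^ 2
      ≤ ∑ x : V, ((η x : ℕ) : ℝ) *
          (Matrix.mulVec (NormedSpace.exp (t • MA)) (fun y => f y ^ 2) x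
            - (Matrix.mulVec (NormedSpace.exp (t • MA)) f x) ^ 2) :=
  variance_estimate_general adj hsym hirr a α hα ML hML MA hMA t ht η f
end
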